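/- arXiv:1702.03333 — 6 statements merged into one kernel-verified Lean document; each statement's English description precedes it below -/
import Mathlib

section
/- For θ ∈ (0,1), define f(k) = 2((1-θ)k + 1 + θ)/(θ|k² - 1|), μ = (1-θ)²/(θ(1+θ-2√θ)), and σ = (1-θ)/((1-√θ)(2√(θ+1) + √θ - 1)). Then for all k in the closed interval [-1/σ, 1] with k ≠ ±1, f(k) ≥ μ. -/
/-!
Write `s = √θ` and `t = √(1 + θ)`. Then `μ = (1 + s)² / θ` and `-1/σ = (1 - s - 2t) / (1 + s)`, so
the claim is `(1 + s)² |k² - 1| ≤ 2((1 - s²)k + 1 + s²)`. For `|k| < 1` the difference of the two sides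
is the square `((1 + s)k + 1 - s)²`. For `k < -1` it is `4t² - X²` with `X = (1 + s)k - (1 - s)`, and
the constraint `k ≥ -1/σ` says exactly that `-2t ≤ X`, while `X < 0` because `k < -1`.
-/

namespace NozzleBound

lemma div_sq_mul_eq (s : ℝ) (hs : s ≠ 1) :
    (1 - s ^ 2) ^ 2 / (s ^ 2 * (1 + s ^ 2 - 2 * s)) = (1 + s) ^ 2 / s ^ 2 := by
  have hs' : (1 - s) ^ 2 ≠ 0 := pow_ne_zero 2 (sub_ne_zero.2 hs.symm)
  rw [show (1 - s ^ 2) ^ 2 = (1 - s) ^ 2 * (1 + s) ^ 2 by ring,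
    show s ^ 2 * (1 + s ^ 2 - 2 * s) = (1 - s) ^ 2 * s ^ 2 by ring, mul_div_mul_left _ _ hs']

lemma neg_one_div_div_eq (s t : ℝ) (hs : s ≠ 1) :
    -1 / ((1 - s ^ 2) / ((1 - s) * (2 * t + s - 1))) = (1 - s - 2 * t) / (1 + s) := by
  have hs' : 1 - s ≠ 0 := sub_ne_zero.2 hs.symm
  rw [show 1 - s ^ 2 = (1 - s) * (1 + s) by ring, mul_div_mul_left _ _ hs', neg_div, one_div_div,
    ← neg_div]
  ring

lemma sq_mul_abs_sq_sub_one_le (s t k : ℝ) (hs : 0 ≤ 1 + s) (ht : t ^ 2 = 1 + s ^ 2)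
    (hk : k ≤ 1) (hlow : 1 - s - 2 * t ≤ (1 + s) * k) :
    (1 + s) ^ 2 * |k ^ 2 - 1| ≤ 2 * ((1 - s ^ 2) * k + 1 + s ^ 2) := by
  rcases le_or_gt (k ^ 2 - 1) 0 with hk2 | hk2
  · rw [abs_of_nonpos hk2]
    linear_combination sq_nonneg ((1 + s) * k + (1 - s))
  · have hk_lt : k < -1 := by nlinarith
    have hX_neg : (1 + s) * k - (1 - s) ≤ 0 := by nlinarith
    have hX_sq : ((1 + s) * k - (1 - s)) ^ 2 ≤ (2 * t) ^ 2 := by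
      rw [← neg_sq]
      exact pow_le_pow_left₀ (by linarith) (by linarith) 2
    rw [abs_of_pos hk2]
    linear_combination hX_sq + 4 * ht

end NozzleBound

open NozzleBound in
theorem stmt0 (θ : ℝ) (hθ : θ ∈ Set.Ioo (0:ℝ) 1)
    (f : ℝ → ℝ) (hf : ∀ k, f k = 2 * ((1 - θ) * k + 1 + θ) / (θ * |k ^ 2 - 1|))
    (μ σ : ℝ)
    (hμ : μ = (1 - θ) ^ 2 / (θ * (1 + θ - 2 * Real.sqrt θ)))
    (hσ : σ = (1 - θ) / ((1 - Real.sqrt θ) * (2 * Real.sqrt (θ + 1) + Real.sqrt θ - 1)))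
    (k : ℝ) (hk : k ∈ Set.Icc (-1 / σ) 1) (hk1 : k ≠ 1) (hk2 : k ≠ -1) :
    μ ≤ f k := by
  obtain ⟨s, hs0, rfl⟩ : ∃ s, 0 < s ∧ θ = s ^ 2 :=
    ⟨Real.sqrt θ, Real.sqrt_pos.2 hθ.1, (Real.sq_sqrt hθ.1.le).symm⟩
  have hs1 : s ≠ 1 := by rintro rfl; simp at hθ
  rw [Real.sqrt_sq hs0.le] at hμ hσ
  set t := Real.sqrt (s ^ 2 + 1)
  have ht : t ^ 2 = 1 + s ^ 2 := by rw [Real.sq_sqrt (by positivity), add_comm]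
  obtain ⟨hk_low, hk_le⟩ := hk
  rw [hσ, neg_one_div_div_eq s t hs1, div_le_iff₀ (by positivity), mul_comm k] at hk_low
  have habs : 0 < |k ^ 2 - 1| := abs_pos.2 <| sub_ne_zero.2 fun h =>
    (sq_eq_one_iff.1 h).elim hk1 hk2
  calc μ = (1 + s) ^ 2 * |k ^ 2 - 1| / (s ^ 2 * |k ^ 2 - 1|) := by
        rw [hμ, div_sq_mul_eq s hs1, mul_div_mul_right _ _ habs.ne']
    _ ≤ f k := by
        rw [hf]
        refine (div_le_div_iff_of_pos_right (by positivity)).2 ?_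
        exact sq_mul_abs_sq_sub_one_le s t k (by positivity) ht hk_le hk_low
end

section
/- Let γ > 1 and ρ₀ > 0. For ρ in a compact set with 1/C ≤ ρ/ρ₀ ≤ C (C > 1), along the 1-shock curve through (ρ₀, v₀), v = v₀ - √((p(ρ)-p(ρ₀))/(ρρ₀(ρ-ρ₀)))·(ρ-ρ₀), the Riemann invariant w = v + ρ^θ/θ satisfies w = w(ρ₀,v₀) + O(ρ₀^((γ-7)/2)(ρ-ρ₀)³) as ρ → ρ₀, where the implied constant depends only on C. -/
open Real Set

private lemma mvt_step {a b M : ℝ} {k : ℕ} (f f' : ℝ → ℝ)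
    (hM : 0 ≤ M)
    (hf : ∀ x ∈ Icc a b, HasDerivAt f (f' x) x)
    (h1 : f 1 = 0) (h1m : 1 ∈ Icc a b)
    (hbd : ∀ x ∈ Icc a b, |f' x| ≤ M * |x - 1| ^ k) :
    ∀ s ∈ Icc a b, |f s| ≤ M * |s - 1| ^ (k + 1) := by
  intro s hs
  have hcont : ContinuousOn f (Icc a b) := fun x hx => (hf x hx).continuousAt.continuousWithinAt
  rcases lt_trichotomy s 1 with h | h | h
  · have hsub : Icc s 1 ⊆ Icc a b := Icc_subset_Icc hs.1 h1m.2
    obtain ⟨c, hc, hc'⟩ := exists_hasDerivAt_eq_slope f f' h (hcont.mono hsub)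
      (fun x hx => hf x (hsub ⟨le_of_lt hx.1, le_of_lt hx.2⟩))
    have hc2 : c ∈ Icc a b := hsub ⟨le_of_lt hc.1, le_of_lt hc.2⟩
    have hne : (1:ℝ) - s ≠ 0 := by linarith [hc.1, hc.2]
    have hfs : f s = -(f' c * (1 - s)) := by
      rw [hc', h1]
      field_simp
      ring
    rw [hfs, abs_neg, abs_mul]
    have h1 : |f' c| ≤ M * |c - 1| ^ k := hbd c hc2
    have h2 : |c - 1| ≤ |s - 1| := by
      rw [abs_of_neg (by linarith [hc.2] : c - 1 < 0), abs_of_neg (by linarith : s - 1 < 0)]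
      linarith [hc.1]
    have h3 : |(1:ℝ) - s| = |s - 1| := abs_sub_comm 1 s
    calc |f' c| * |1 - s| ≤ (M * |c - 1| ^ k) * |s - 1| := by
          rw [h3]; exact mul_le_mul_of_nonneg_right h1 (abs_nonneg _)
      _ ≤ (M * |s - 1| ^ k) * |s - 1| := by
          have := pow_le_pow_left₀ (abs_nonneg _) h2 k
          exact mul_le_mul_of_nonneg_right (mul_le_mul_of_nonneg_left this hM) (abs_nonneg _)
      _ = M * |s - 1| ^ (k + 1) := by ring
  · simp [h, h1]
  · have hsub : Icc 1 s ⊆ Icc a b := Icc_subset_Icc h1m.1 hs.2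
    obtain ⟨c, hc, hc'⟩ := exists_hasDerivAt_eq_slope f f' h (hcont.mono hsub)
      (fun x hx => hf x (hsub ⟨le_of_lt hx.1, le_of_lt hx.2⟩))
    have hc2 : c ∈ Icc a b := hsub ⟨le_of_lt hc.1, le_of_lt hc.2⟩
    have hne : s - 1 ≠ 0 := by linarith
    have hfs : f s = f' c * (s - 1) := by
      rw [hc', h1]
      field_simp
      ring
    rw [hfs, abs_mul]
    have hb1 : |f' c| ≤ M * |c - 1| ^ k := hbd c hc2
    have h2 : |c - 1| ≤ |s - 1| := by
      rw [abs_of_pos (by linarith [hc.1] : (0:ℝ) < c - 1), abs_of_pos (by linarith : (0:ℝ) < s - 1)]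
      linarith [hc.2]
    calc |f' c| * |s - 1| ≤ (M * |c - 1| ^ k) * |s - 1| :=
          mul_le_mul_of_nonneg_right hb1 (abs_nonneg _)
      _ ≤ (M * |s - 1| ^ k) * |s - 1| := by
          have := pow_le_pow_left₀ (abs_nonneg _) h2 k
          exact mul_le_mul_of_nonneg_right (mul_le_mul_of_nonneg_left this hM) (abs_nonneg _)
      _ = M * |s - 1| ^ (k + 1) := by ring


private noncomputable def psi0 (t s : ℝ) : ℝ :=
  (-(t^2)) * s^(2*t+2) + (t+1)^2 * s^(2*t+1) + (-(2*(2*t+1))) * s^(t+1) + (t+1)^2 * s + (-(t^2))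
private noncomputable def psi1 (t s : ℝ) : ℝ :=
  (-(t^2)*(2*t+2)) * s^(2*t+1) + ((t+1)^2*(2*t+1)) * s^(2*t) + (-(2*(2*t+1))*(t+1)) * s^t + (t+1)^2
private noncomputable def psi2 (t s : ℝ) : ℝ :=
  (-(t^2)*(2*t+2)*(2*t+1)) * s^(2*t) + ((t+1)^2*(2*t+1)*(2*t)) * s^(2*t-1) + (-(2*(2*t+1))*(t+1)*t) * s^(t-1)
private noncomputable def psi3 (t s : ℝ) : ℝ :=
  (-(t^2)*(2*t+2)*(2*t+1)*(2*t)) * s^(2*t-1) + ((t+1)^2*(2*t+1)*(2*t)*(2*t-1)) * s^(2*t-2) + (-(2*(2*t+1))*(t+1)*t*(t-1)) * s^(t-2)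
private noncomputable def psi4 (t s : ℝ) : ℝ :=
  (-(t^2)*(2*t+2)*(2*t+1)*(2*t)*(2*t-1)) * s^(2*t-2) + ((t+1)^2*(2*t+1)*(2*t)*(2*t-1)*(2*t-2)) * s^(2*t-3) + (-(2*(2*t+1))*(t+1)*t*(t-1)*(t-2)) * s^(t-3)

private lemma psi0_one (t : ℝ) : psi0 t 1 = 0 := by simp [psi0, Real.one_rpow]; ring
private lemma psi1_one (t : ℝ) : psi1 t 1 = 0 := by simp [psi1, Real.one_rpow]; ring
private lemma psi2_one (t : ℝ) : psi2 t 1 = 0 := by simp [psi2, Real.one_rpow]; ring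
private lemma psi3_one (t : ℝ) : psi3 t 1 = 0 := by simp [psi3, Real.one_rpow]; ring

private lemma hd0 (t : ℝ) {x : ℝ} (hx : x ≠ 0) : HasDerivAt (psi0 t) (psi1 t x) x := by
  have h1 : HasDerivAt (fun s : ℝ => s ^ (2*t+2)) ((2*t+2) * x^(2*t+2-1)) x :=
    Real.hasDerivAt_rpow_const (Or.inl hx)
  have h2 : HasDerivAt (fun s : ℝ => s ^ (2*t+1)) ((2*t+1) * x^(2*t+1-1)) x :=
    Real.hasDerivAt_rpow_const (Or.inl hx)
  have h3 : HasDerivAt (fun s : ℝ => s ^ (t+1)) ((t+1) * x^(t+1-1)) x :=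
    Real.hasDerivAt_rpow_const (Or.inl hx)
  simp only [psi0, psi1]
  have H := ((((h1.const_mul (-(t^2))).add (h2.const_mul ((t+1)^2))).add
      (h3.const_mul (-(2*(2*t+1))))).add ((hasDerivAt_id x).const_mul ((t+1)^2))).add_const (-(t^2))
  convert H using 1
  · rfl
  · rfl
  · rfl
  rw [show 2*t+2-1 = 2*t+1 by ring, show 2*t+1-1 = 2*t by ring, show t+1-1 = t by ring]
  ring

private lemma hd1 (t : ℝ) {x : ℝ} (hx : x ≠ 0) : HasDerivAt (psi1 t) (psi2 t x) x := by
  have h1 : HasDerivAt (fun s : ℝ => s ^ (2*t+1)) ((2*t+1) * x^(2*t+1-1)) x :=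
    Real.hasDerivAt_rpow_const (Or.inl hx)
  have h2 : HasDerivAt (fun s : ℝ => s ^ (2*t)) ((2*t) * x^(2*t-1)) x :=
    Real.hasDerivAt_rpow_const (Or.inl hx)
  have h3 : HasDerivAt (fun s : ℝ => s ^ t) (t * x^(t-1)) x :=
    Real.hasDerivAt_rpow_const (Or.inl hx)
  simp only [psi1, psi2]
  have H := (((h1.const_mul (-(t^2)*(2*t+2))).add (h2.const_mul ((t+1)^2*(2*t+1)))).add
      (h3.const_mul (-(2*(2*t+1))*(t+1)))).add_const ((t+1)^2)
  convert H using 1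
  · rfl
  · rfl
  · rfl
  rw [show 2*t+1-1 = 2*t by ring]
  ring

private lemma hd2 (t : ℝ) {x : ℝ} (hx : x ≠ 0) : HasDerivAt (psi2 t) (psi3 t x) x := by
  have h1 : HasDerivAt (fun s : ℝ => s ^ (2*t)) ((2*t) * x^(2*t-1)) x :=
    Real.hasDerivAt_rpow_const (Or.inl hx)
  have h2 : HasDerivAt (fun s : ℝ => s ^ (2*t-1)) ((2*t-1) * x^(2*t-1-1)) x :=
    Real.hasDerivAt_rpow_const (Or.inl hx)
  have h3 : HasDerivAt (fun s : ℝ => s ^ (t-1)) ((t-1) * x^(t-1-1)) x :=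
    Real.hasDerivAt_rpow_const (Or.inl hx)
  simp only [psi2, psi3]
  have H := ((h1.const_mul (-(t^2)*(2*t+2)*(2*t+1))).add
      (h2.const_mul ((t+1)^2*(2*t+1)*(2*t)))).add (h3.const_mul (-(2*(2*t+1))*(t+1)*t))
  convert H using 1
  · rfl
  · rfl
  · rfl
  rw [show 2*t-1-1 = 2*t-2 by ring, show t-1-1 = t-2 by ring]
  ring

private lemma hd3 (t : ℝ) {x : ℝ} (hx : x ≠ 0) : HasDerivAt (psi3 t) (psi4 t x) x := by
  have h1 : HasDerivAt (fun s : ℝ => s ^ (2*t-1)) ((2*t-1) * x^(2*t-1-1)) x :=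
    Real.hasDerivAt_rpow_const (Or.inl hx)
  have h2 : HasDerivAt (fun s : ℝ => s ^ (2*t-2)) ((2*t-2) * x^(2*t-2-1)) x :=
    Real.hasDerivAt_rpow_const (Or.inl hx)
  have h3 : HasDerivAt (fun s : ℝ => s ^ (t-2)) ((t-2) * x^(t-2-1)) x :=
    Real.hasDerivAt_rpow_const (Or.inl hx)
  simp only [psi3, psi4]
  have H := ((h1.const_mul (-(t^2)*(2*t+2)*(2*t+1)*(2*t))).add
      (h2.const_mul ((t+1)^2*(2*t+1)*(2*t)*(2*t-1)))).add
      (h3.const_mul (-(2*(2*t+1))*(t+1)*t*(t-1)))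
  convert H using 1
  · rfl
  · rfl
  · rfl
  rw [show 2*t-1-1 = 2*t-2 by ring, show 2*t-2-1 = 2*t-3 by ring, show t-2-1 = t-3 by ring]
  ring

private lemma rpow_upper {C s e D : ℝ} (hC : 1 < C) (h1 : 1/C ≤ s) (h2 : s ≤ C)
    (he : |e| ≤ D) : s ^ e ≤ C ^ D := by
  have hC0 : (0:ℝ) < C := by linarith
  have hs0 : (0:ℝ) < s := lt_of_lt_of_le (by positivity) h1
  have hlogC : 0 ≤ Real.log C := Real.log_nonneg (le_of_lt hC)
  have hlo : -Real.log C ≤ Real.log s := by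
    have := Real.log_le_log (by positivity) h1
    rwa [Real.log_div one_ne_zero hC0.ne', Real.log_one, zero_sub] at this
  have hhi : Real.log s ≤ Real.log C := Real.log_le_log hs0 h2
  have habs : |Real.log s| ≤ Real.log C := abs_le.2 ⟨hlo, hhi⟩
  rw [Real.rpow_def_of_pos hs0, Real.rpow_def_of_pos hC0]
  apply Real.exp_le_exp.2
  calc Real.log s * e ≤ |Real.log s * e| := le_abs_self _
    _ = |Real.log s| * |e| := abs_mul _ _
    _ ≤ Real.log C * D := mul_le_mul habs he (abs_nonneg _) hlogC

private lemma rpow_lower {C s e D : ℝ} (hC : 1 < C) (h1 : 1/C ≤ s) (h2 : s ≤ C)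
    (he : |e| ≤ D) : Real.exp (-(Real.log C * D)) ≤ s ^ e := by
  have hC0 : (0:ℝ) < C := by linarith
  have hs0 : (0:ℝ) < s := lt_of_lt_of_le (by positivity) h1
  have hlogC : 0 ≤ Real.log C := Real.log_nonneg (le_of_lt hC)
  have hlo : -Real.log C ≤ Real.log s := by
    have := Real.log_le_log (by positivity) h1
    rwa [Real.log_div one_ne_zero hC0.ne', Real.log_one, zero_sub] at this
  have hhi : Real.log s ≤ Real.log C := Real.log_le_log hs0 h2
  have habs : |Real.log s| ≤ Real.log C := abs_le.2 ⟨hlo, hhi⟩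
  rw [Real.rpow_def_of_pos hs0]
  apply Real.exp_le_exp.2
  calc -(Real.log C * D) ≤ -|Real.log s * e| := by
        rw [abs_mul]
        have : |Real.log s| * |e| ≤ Real.log C * D := mul_le_mul habs he (abs_nonneg _) hlogC
        linarith
    _ ≤ Real.log s * e := neg_abs_le _

private lemma psi4_bound (t C : ℝ) (ht : 0 < t) (hC : 1 < C) :
    ∀ s, 1/C ≤ s → s ≤ C →
      |psi4 t s| ≤ (|(-(t^2)*(2*t+2)*(2*t+1)*(2*t)*(2*t-1))| + |((t+1)^2*(2*t+1)*(2*t)*(2*t-1)*(2*t-2))|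
        + |(-(2*(2*t+1))*(t+1)*t*(t-1)*(t-2))|) * C ^ (2*t+3) := by
  intro s h1 h2
  have hs0 : (0:ℝ) ≤ s := le_trans (by positivity) h1
  have hb1 : s ^ (2*t-2) ≤ C ^ (2*t+3) :=
    rpow_upper hC h1 h2 (abs_le.2 ⟨by linarith, by linarith⟩)
  have hb2 : s ^ (2*t-3) ≤ C ^ (2*t+3) :=
    rpow_upper hC h1 h2 (abs_le.2 ⟨by linarith, by linarith⟩)
  have hb3 : s ^ (t-3) ≤ C ^ (2*t+3) :=
    rpow_upper hC h1 h2 (abs_le.2 ⟨by linarith, by linarith⟩)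
  have hn1 : (0:ℝ) ≤ s ^ (2*t-2) := Real.rpow_nonneg hs0 _
  have hn2 : (0:ℝ) ≤ s ^ (2*t-3) := Real.rpow_nonneg hs0 _
  have hn3 : (0:ℝ) ≤ s ^ (t-3) := Real.rpow_nonneg hs0 _
  calc |psi4 t s| ≤ |(-(t^2)*(2*t+2)*(2*t+1)*(2*t)*(2*t-1)) * s^(2*t-2)|
        + |((t+1)^2*(2*t+1)*(2*t)*(2*t-1)*(2*t-2)) * s^(2*t-3)|
        + |(-(2*(2*t+1))*(t+1)*t*(t-1)*(t-2)) * s^(t-3)| := by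
        simp only [psi4]
        exact (abs_add_three _ _ _)
    _ ≤ _ := by
        have key : ∀ (a e : ℝ), s^e ≤ C^(2*t+3) → |a * s^e| ≤ |a| * C^(2*t+3) := by
          intro a e hbe
          rw [abs_mul, abs_of_nonneg (Real.rpow_nonneg hs0 _)]
          exact mul_le_mul_of_nonneg_left hbe (abs_nonneg _)
        have k1 := key (-(t^2)*(2*t+2)*(2*t+1)*(2*t)*(2*t-1)) (2*t-2) hb1
        have k2 := key ((t+1)^2*(2*t+1)*(2*t)*(2*t-1)*(2*t-2)) (2*t-3) hb2
        have k3 := key (-(2*(2*t+1))*(t+1)*t*(t-1)*(t-2)) (t-3) hb3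
        ring_nf
        ring_nf at k1 k2 k3
        linarith

set_option maxHeartbeats 1000000 in
private lemma Flem (t C : ℝ) (ht : 0 < t) (hC : 1 < C) :
    ∃ K > 0, ∀ s : ℝ, 1/C ≤ s → s ≤ C → s ≠ 1 →
      |(s^t - 1)/t - Real.sqrt ((s^(2*t+1) - 1) / ((2*t+1) * s * (s-1))) * (s-1)|
        ≤ K * |s-1|^3 := by
  have hC0 : (0:ℝ) < C := by linarith
  have hinvC : (0:ℝ) < 1/C := by positivity
  have hinvC1 : 1/C ≤ 1 := by rw [div_le_one hC0]; linarith
  have h1m : (1:ℝ) ∈ Icc (1/C) C := ⟨hinvC1, by linarith⟩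
  set M : ℝ := (|(-(t^2)*(2*t+2)*(2*t+1)*(2*t)*(2*t-1))| + |((t+1)^2*(2*t+1)*(2*t)*(2*t-1)*(2*t-2))|
        + |(-(2*(2*t+1))*(t+1)*t*(t-1)*(t-2))|) * C ^ (2*t+3) with hMdef
  have hM : 0 ≤ M := by positivity
  have hposIcc : ∀ x ∈ Icc (1/C) C, x ≠ 0 := by
    intro x hx; have : (0:ℝ) < x := lt_of_lt_of_le hinvC hx.1; exact this.ne'
  -- derivative chain bounds
  have hb4 : ∀ x ∈ Icc (1/C) C, |psi4 t x| ≤ M * |x - 1| ^ 0 := by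
    intro x hx; rw [pow_zero, mul_one]; exact psi4_bound t C ht hC x hx.1 hx.2
  have hb3 : ∀ x ∈ Icc (1/C) C, |psi3 t x| ≤ M * |x - 1| ^ 1 :=
    mvt_step (psi3 t) (psi4 t) hM (fun x hx => hd3 t (hposIcc x hx)) (psi3_one t) h1m hb4
  have hb2 : ∀ x ∈ Icc (1/C) C, |psi2 t x| ≤ M * |x - 1| ^ 2 :=
    mvt_step (psi2 t) (psi3 t) hM (fun x hx => hd2 t (hposIcc x hx)) (psi2_one t) h1m hb3
  have hb1 : ∀ x ∈ Icc (1/C) C, |psi1 t x| ≤ M * |x - 1| ^ 3 :=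
    mvt_step (psi1 t) (psi2 t) hM (fun x hx => hd1 t (hposIcc x hx)) (psi1_one t) h1m hb2
  have hb0 : ∀ x ∈ Icc (1/C) C, |psi0 t x| ≤ M * |x - 1| ^ 4 :=
    mvt_step (psi0 t) (psi1 t) hM (fun x hx => hd0 t (hposIcc x hx)) (psi0_one t) h1m hb1
  -- lower bound for the slope
  set m : ℝ := Real.exp (-(Real.log C * |t - 1|)) with hmdef
  have hm0 : 0 < m := Real.exp_pos _
  refine ⟨M * C / ((2*t+1) * t^2 * m) + 1, by positivity, ?_⟩
  intro s hs1 hs2 hsne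
  have hs0 : (0:ℝ) < s := lt_of_lt_of_le hinvC hs1
  have hsm1 : s - 1 ≠ 0 := sub_ne_zero.mpr hsne
  have ht2 : (0:ℝ) < 2*t+1 := by linarith
  -- MVT: A = c^(t-1)
  have hrpow_cont : ContinuousOn (fun x : ℝ => x ^ t) (Icc (1/C) C) := by
    intro x hx
    exact (Real.continuousAt_rpow_const x t (Or.inl (hposIcc x hx))).continuousWithinAt
  have hrpow_deriv : ∀ x ∈ Icc (1/C) C, HasDerivAt (fun x : ℝ => x ^ t) (t * x ^ (t-1)) x :=
    fun x hx => Real.hasDerivAt_rpow_const (Or.inl (hposIcc x hx))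
  set A : ℝ := (s^t - 1)/(t*(s-1)) with hAdef
  obtain ⟨c, hcIcc, hcA⟩ : ∃ c ∈ Icc (1/C) C, A = c ^ (t-1) := by
    rcases lt_or_gt_of_ne hsne with h | h
    · have hsub : Icc s 1 ⊆ Icc (1/C) C := Icc_subset_Icc hs1 h1m.2
      obtain ⟨c, hc, hc'⟩ := exists_hasDerivAt_eq_slope (fun x : ℝ => x ^ t)
        (fun x => t * x ^ (t-1)) h (hrpow_cont.mono hsub)
        (fun x hx => hrpow_deriv x (hsub ⟨le_of_lt hx.1, le_of_lt hx.2⟩))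
      refine ⟨c, hsub ⟨le_of_lt hc.1, le_of_lt hc.2⟩, ?_⟩
      rw [hAdef]
      simp only [Real.one_rpow] at hc'
      rw [eq_div_iff (by intro hh; apply hsne; linarith : (1:ℝ) - s ≠ 0)] at hc'
      rw [div_eq_iff (by simp [ht.ne', hsm1] : t*(s-1) ≠ 0)]
      linear_combination hc'
    · have hsub : Icc 1 s ⊆ Icc (1/C) C := Icc_subset_Icc h1m.1 hs2
      obtain ⟨c, hc, hc'⟩ := exists_hasDerivAt_eq_slope (fun x : ℝ => x ^ t)
        (fun x => t * x ^ (t-1)) h (hrpow_cont.mono hsub)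
        (fun x hx => hrpow_deriv x (hsub ⟨le_of_lt hx.1, le_of_lt hx.2⟩))
      refine ⟨c, hsub ⟨le_of_lt hc.1, le_of_lt hc.2⟩, ?_⟩
      rw [hAdef]
      simp only [Real.one_rpow] at hc'
      rw [eq_div_iff (by intro hh; apply hsne; linarith : s - 1 ≠ 0)] at hc'
      rw [div_eq_iff (by simp [ht.ne', hsm1] : t*(s-1) ≠ 0)]
      linear_combination -hc'
  have hmA : m ≤ A := by
    rw [hcA, hmdef]
    exact rpow_lower hC hcIcc.1 hcIcc.2 (le_refl _)
  have hA0 : 0 < A := lt_of_lt_of_le hm0 hmA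
  -- Y and its nonnegativity
  set Y : ℝ := (s^(2*t+1) - 1) / ((2*t+1) * s * (s-1)) with hYdef
  have hY0 : 0 ≤ Y := by
    rcases lt_or_gt_of_ne hsne with h | h
    · have hlt : s ^ (2*t+1) < 1 := Real.rpow_lt_one hs0.le h (by linarith)
      apply div_nonneg_iff.mpr
      refine Or.inr ⟨by linarith, ?_⟩
      have h2 : (0:ℝ) < (2*t+1) * s := by positivity
      nlinarith
    · have hgt : 1 < s ^ (2*t+1) :=
        (Real.one_lt_rpow_iff_of_pos hs0).mpr (Or.inl ⟨h, by linarith⟩)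
      apply div_nonneg (by linarith)
      have h2 : (0:ℝ) < (2*t+1) * s := by positivity
      nlinarith
  have hsqY : Real.sqrt Y ^ 2 = Y := Real.sq_sqrt hY0
  have hApY : 0 < A + Real.sqrt Y := by
    have := Real.sqrt_nonneg Y; linarith
  have hFfac : (s^t - 1)/t - Real.sqrt Y*(s-1) = (s-1) * (A - Real.sqrt Y) := by
    rw [hAdef]; field_simp
  have hdiff : A - Real.sqrt Y = (A^2 - Y)/(A + Real.sqrt Y) := by
    rw [eq_div_iff hApY.ne']
    linear_combination -hsqY
  have e1 : s^(t+1) = s^t * s := by rw [Real.rpow_add hs0, Real.rpow_one]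
  have e2 : s^(2*t+1) = s^t * s^t * s := by
    rw [show 2*t+1 = t+(t+1) by ring, Real.rpow_add hs0, e1]; ring
  have e3 : s^(2*t+2) = s^t * s^t * s * s := by
    rw [show 2*t+2 = (2*t+1)+1 by ring, Real.rpow_add hs0, Real.rpow_one, e2]
  have hdenpos : (0:ℝ) < (2*t+1) * t^2 * s * (s-1)^2 := by positivity
  have hkey : A^2 - Y = psi0 t s / ((2*t+1) * t^2 * s * (s-1)^2) := by
    rw [hYdef, hAdef]; simp only [psi0]; rw [e1, e2, e3]
    field_simp
    ring
  have habs4 : |s-1|^4 = (s-1)^4 := by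
    rw [← abs_pow, abs_of_nonneg (by positivity)]
  have habs : |A - Real.sqrt Y| ≤ (M*C/((2*t+1)*t^2*m)) * (s-1)^2 := by
    calc |A - Real.sqrt Y|
        = |psi0 t s| / ( ((2*t+1)*t^2*s*(s-1)^2) * (A + Real.sqrt Y) ) := by
          rw [hdiff, hkey, abs_div, abs_of_pos hApY, abs_div, abs_of_pos hdenpos, div_div]
      _ ≤ (M*(s-1)^4) / ( ((2*t+1)*t^2*(1/C)*(s-1)^2) * m ) := by
          apply div_le_div₀ (by positivity) ?_ (by positivity) ?_
          · calc |psi0 t s| ≤ M*|s-1|^4 := hb0 s ⟨hs1, hs2⟩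
              _ = M*(s-1)^4 := by rw [habs4]
          · apply mul_le_mul ?_ ?_ (le_of_lt hm0) (by positivity)
            · gcongr
            · have := Real.sqrt_nonneg Y; linarith
      _ = (M*C/((2*t+1)*t^2*m)) * (s-1)^2 := by
          field_simp
  calc |(s^t - 1)/t - Real.sqrt Y*(s-1)| = |s-1| * |A - Real.sqrt Y| := by
        rw [hFfac, abs_mul]
    _ ≤ |s-1| * ((M*C/((2*t+1)*t^2*m)) * (s-1)^2) :=
        mul_le_mul_of_nonneg_left habs (abs_nonneg _)
    _ ≤ (M*C/((2*t+1)*t^2*m) + 1) * |s-1|^3 := by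
        have h2 : (s-1)^2 = |s-1|^2 := (sq_abs _).symm
        have hB : 0 ≤ M*C/((2*t+1)*t^2*m) := by positivity
        have h3 : (0:ℝ) ≤ |s-1|^3 := by positivity
        rw [h2]
        nlinarith
theorem stmt7 (γ : ℝ) (hγ : 1 < γ) (C : ℝ) (hC : 1 < C) :
    ∃ K > 0, ∀ ρ₀ v₀ ρ : ℝ, 0 < ρ₀ → 1 / C ≤ ρ / ρ₀ → ρ / ρ₀ ≤ C →
      |(v₀ - Real.sqrt ((ρ ^ γ / γ - ρ₀ ^ γ / γ) / (ρ * ρ₀ * (ρ - ρ₀))) * (ρ - ρ₀)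
            + ρ ^ ((γ - 1) / 2) / ((γ - 1) / 2))
          - (v₀ + ρ₀ ^ ((γ - 1) / 2) / ((γ - 1) / 2))|
        ≤ K * ρ₀ ^ ((γ - 7) / 2) * |ρ - ρ₀| ^ 3 := by
  obtain ⟨K, hK, hF⟩ := Flem ((γ-1)/2) C (by linarith) hC
  have hγ2 : 2*((γ-1)/2)+1 = γ := by ring
  rw [hγ2] at hF
  refine ⟨K, hK, ?_⟩
  intro ρ₀ v₀ ρ hρ₀ hr1 hr2
  have hθ0 : (γ-1)/2 ≠ 0 := by
    have : (0:ℝ) < (γ-1)/2 := by linarith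
    exact this.ne'
  by_cases hρ : ρ = ρ₀
  · subst hρ
    simp only [sub_self, mul_zero, abs_zero]
    rw [show v₀ - 0 + ρ ^ ((γ - 1) / 2) / ((γ - 1) / 2) - (v₀ + ρ ^ ((γ - 1) / 2) / ((γ - 1) / 2)) = 0 by ring]
    rw [abs_zero]
    positivity
  · obtain ⟨s, hρs⟩ : ∃ s, ρ = s * ρ₀ := ⟨ρ/ρ₀, by field_simp⟩
    subst hρs
    rw [mul_div_assoc, div_self hρ₀.ne', mul_one] at hr1 hr2
    have hs0 : (0:ℝ) < s := lt_of_lt_of_le (by positivity) hr1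
    have hρpos : 0 < s * ρ₀ := by positivity
    have hsne : s ≠ 1 := by
      intro h; apply hρ; rw [h, one_mul]
    have hsm1 : s - 1 ≠ 0 := sub_ne_zero.mpr hsne
    have hγ0 : (0:ℝ) < γ := by linarith
    have hrγ : (s * ρ₀) ^ γ = s ^ γ * ρ₀ ^ γ := Real.mul_rpow hs0.le hρ₀.le
    have hrθ : (s * ρ₀) ^ ((γ-1)/2) = s ^ ((γ-1)/2) * ρ₀ ^ ((γ-1)/2) :=
      Real.mul_rpow hs0.le hρ₀.le
    have hρ₀γ : ρ₀ ^ γ = ρ₀ ^ (γ-3) * ρ₀ * ρ₀ * ρ₀ := by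
      rw [← Real.rpow_add_one hρ₀.ne', ← Real.rpow_add_one hρ₀.ne',
        ← Real.rpow_add_one hρ₀.ne', show γ-3+1+1+1 = γ by ring]
    have hX : ((s * ρ₀) ^ γ / γ - ρ₀ ^ γ / γ) / ((s * ρ₀) * ρ₀ * ((s * ρ₀) - ρ₀))
        = ρ₀ ^ (γ-3) * ((s ^ γ - 1) / (γ * s * (s-1))) := by
      rw [hrγ, hρ₀γ, show (s * ρ₀) * ρ₀ * ((s * ρ₀) - ρ₀) = (s*(s-1)) * (ρ₀*ρ₀*ρ₀) by ring]
      field_simp [hs0.ne', hsm1, hρ₀.ne', hγ0.ne']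
    have hsqrtρ : Real.sqrt (ρ₀ ^ (γ-3)) = ρ₀ ^ ((γ-3)/2) := by
      rw [Real.sqrt_eq_rpow, ← Real.rpow_mul hρ₀.le, show (γ-3)*(1/2) = (γ-3)/2 by ring]
    have hsX : Real.sqrt (((s * ρ₀) ^ γ / γ - ρ₀ ^ γ / γ) / ((s * ρ₀) * ρ₀ * ((s * ρ₀) - ρ₀)))
        = ρ₀ ^ ((γ-3)/2) * Real.sqrt ((s ^ γ - 1) / (γ * s * (s-1))) := by
      rw [hX, Real.sqrt_mul (Real.rpow_nonneg hρ₀.le _), hsqrtρ]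
    have hmul : ρ₀ ^ ((γ-3)/2) * ρ₀ = ρ₀ ^ ((γ-1)/2) := by
      rw [← Real.rpow_add_one hρ₀.ne', show (γ-3)/2+1 = (γ-1)/2 by ring]
    have hsplit : ρ₀ ^ ((γ-1)/2) = ρ₀ ^ ((γ-7)/2) * ρ₀ * ρ₀ * ρ₀ := by
      rw [← Real.rpow_add_one hρ₀.ne', ← Real.rpow_add_one hρ₀.ne',
        ← Real.rpow_add_one hρ₀.ne', show (γ-7)/2+1+1+1 = (γ-1)/2 by ring]
    have hEq : v₀ - Real.sqrt (((s * ρ₀) ^ γ / γ - ρ₀ ^ γ / γ) / ((s * ρ₀) * ρ₀ * ((s * ρ₀) - ρ₀))) * ((s * ρ₀) - ρ₀)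
          + (s * ρ₀) ^ ((γ - 1) / 2) / ((γ - 1) / 2) - (v₀ + ρ₀ ^ ((γ - 1) / 2) / ((γ - 1) / 2))
        = ρ₀ ^ ((γ-1)/2) * ((s ^ ((γ-1)/2) - 1)/((γ-1)/2)
            - Real.sqrt ((s ^ γ - 1) / (γ * s * (s-1))) * (s-1)) := by
      rw [hsX, hrθ, ← hmul]
      field_simp
      ring
    calc |v₀ - Real.sqrt (((s * ρ₀) ^ γ / γ - ρ₀ ^ γ / γ) / ((s * ρ₀) * ρ₀ * ((s * ρ₀) - ρ₀))) * ((s * ρ₀) - ρ₀)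
          + (s * ρ₀) ^ ((γ - 1) / 2) / ((γ - 1) / 2) - (v₀ + ρ₀ ^ ((γ - 1) / 2) / ((γ - 1) / 2))|
        = ρ₀ ^ ((γ-1)/2) * |(s ^ ((γ-1)/2) - 1)/((γ-1)/2)
            - Real.sqrt ((s ^ γ - 1) / (γ * s * (s-1))) * (s-1)| := by
          rw [hEq, abs_mul, abs_of_nonneg (Real.rpow_nonneg hρ₀.le _)]
      _ ≤ ρ₀ ^ ((γ-1)/2) * (K * |s-1| ^ 3) :=
          mul_le_mul_of_nonneg_left (hF s hr1 hr2 hsne) (Real.rpow_nonneg hρ₀.le _)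
      _ = K * ρ₀ ^ ((γ-7)/2) * |(s * ρ₀) - ρ₀| ^ 3 := by
          rw [hsplit, show (s * ρ₀) - ρ₀ = (s-1) * ρ₀ by ring, abs_mul, abs_of_pos hρ₀]
          ring
end

section
/- Let θ ∈ (0,1), b(x) ≥ 0, and μ = (1-θ)²/(θ(1+θ-2√θ)). Suppose z < 0, w ∈ ℝ with k := w/z ∈ [-1/σ, 1] (σ as in context), and let λ₁ = ((1-θ)k+1+θ)z/2, v = (k+1)z/2, ρ^θ = θ(k-1)z/2. Then for any a with |a| ≤ μ·b(x), one has b(x)·λ₁·z - a·ρ^θ·v ≥ 0. -/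
/-!
Write `s = √θ`, `t = √(θ + 1)`. Then `μ θ = (1 + s)²` and `(1 + s) / σ = 2t + s - 1`, and the
quantity to be bounded is `z² / 4 · (2 b ((1 - θ) k + 1 + θ) - a θ (k² - 1))`. Since
`|a| θ |k² - 1| ≤ b (1 + s)² |k² - 1|`, it suffices that `(1 + s)² |k² - 1| ≤ 2 ((1 - θ) k + 1 + θ)`.
For `|k| ≤ 1` the difference is the square `((1 + s) k + 1 - s)²`; for `k < -1` it factors as
`((1 + s) k + 2t + s - 1) (2t + 1 - s - (1 + s) k)`, whose first factor is nonnegative exactly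
when `k ≥ -1/σ`.
-/

lemma one_sub_sq_div_mul_eq_one_add_sq {θ s : ℝ} (hs : s ^ 2 = θ) (hs0 : s ≠ 0) (hs1 : s ≠ 1) :
    (1 - θ) ^ 2 / (θ * (1 + θ - 2 * s)) * θ = (1 + s) ^ 2 := by
  subst hs
  have : 1 - s ≠ 0 := sub_ne_zero.2 (Ne.symm hs1)
  rw [show 1 + s ^ 2 - 2 * s = (1 - s) ^ 2 by ring]
  field_simp
  ring

lemma one_add_div_div_one_sub_mul {θ s : ℝ} (hs : s ^ 2 = θ) (hs1 : s ≠ 1) (hs1' : s ≠ -1) (X : ℝ) :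
    (1 + s) / ((1 - θ) / ((1 - s) * X)) = X := by
  subst hs
  have h1 : 1 - s ≠ 0 := sub_ne_zero.2 (Ne.symm hs1)
  have h2 : 1 + s ≠ 0 := by contrapose! hs1'; linarith
  rw [div_div_eq_mul_div, show 1 - s ^ 2 = (1 - s) * (1 + s) by ring]
  field_simp

lemma one_add_sq_mul_abs_sq_sub_one_le {θ s t k : ℝ} (hs : s ^ 2 = θ) (ht : t ^ 2 = θ + 1)
    (hs0 : 0 ≤ s) (hs1 : s ≤ 1)
    (hk : -(2 * t + s - 1) ≤ (1 + s) * k) (hk1 : k ≤ 1) :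
    (1 + s) ^ 2 * |k ^ 2 - 1| ≤ 2 * ((1 - θ) * k + 1 + θ) := by
  rcases le_or_gt (k ^ 2) 1 with hk2 | hk2
  · rw [abs_of_nonpos (by linarith)]
    have hsq : 2 * ((1 - θ) * k + 1 + θ) - (1 + s) ^ 2 * (1 - k ^ 2) =
        ((1 + s) * k + (1 - s)) ^ 2 := by linear_combination (2 * k - 2) * hs
    nlinarith [sq_nonneg ((1 + s) * k + (1 - s))]
  · rw [abs_of_pos (by linarith)]
    have hk' : k < -1 := by nlinarith
    have ht1 : 1 ≤ t := by nlinarith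
    have hfac : 2 * ((1 - θ) * k + 1 + θ) - (1 + s) ^ 2 * (k ^ 2 - 1) =
        ((1 + s) * k + (2 * t + s - 1)) * ((2 * t + 1 - s) - (1 + s) * k) := by
      linear_combination (2 * k + 2) * hs - 4 * ht
    have hpos : 0 ≤ ((1 + s) * k + (2 * t + s - 1)) * ((2 * t + 1 - s) - (1 + s) * k) :=
      mul_nonneg (by linarith) (by nlinarith)
    linarith

theorem stmt10_general (θ : ℝ) (hθ : θ ∈ Set.Ioo (0:ℝ) 1) (bx : ℝ) (hb : 0 ≤ bx)
    (μ σ : ℝ)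
    (hμ : μ = (1 - θ) ^ 2 / (θ * (1 + θ - 2 * Real.sqrt θ)))
    (hσ : σ = (1 - θ) / ((1 - Real.sqrt θ) * (2 * Real.sqrt (θ + 1) + Real.sqrt θ - 1)))
    (z w : ℝ) (hk : w / z ∈ Set.Icc (-1 / σ) 1)
    (k v ρθ lam₁ : ℝ) (hkk : k = w / z)
    (hlam : lam₁ = ((1 - θ) * k + 1 + θ) * z / 2)
    (hv : v = (k + 1) * z / 2) (hρθ : ρθ = θ * (k - 1) * z / 2)
    (a : ℝ) (ha : |a| ≤ μ * bx) :
    0 ≤ bx * lam₁ * z - a * ρθ * v := by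
  obtain ⟨hθ0, hθ1⟩ := hθ
  subst hkk hlam hv hρθ
  set s := √θ
  set t := √(θ + 1)
  have hs : s ^ 2 = θ := Real.sq_sqrt hθ0.le
  have hs0 : 0 < s := Real.sqrt_pos.2 hθ0
  have hs1 : s < 1 := by nlinarith
  have hμθ : μ * θ = (1 + s) ^ 2 := hμ ▸ one_sub_sq_div_mul_eq_one_add_sq hs hs0.ne' hs1.ne
  have hk_low : -(2 * t + s - 1) ≤ (1 + s) * (w / z) := by
    have h := mul_le_mul_of_nonneg_left hk.1 (by linarith : (0 : ℝ) ≤ 1 + s)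
    rwa [mul_div_assoc', mul_neg_one, neg_div, hσ,
      one_add_div_div_one_sub_mul hs hs1.ne (by linarith)] at h
  have hkey := one_add_sq_mul_abs_sq_sub_one_le hs (Real.sq_sqrt (by linarith)) hs0.le hs1.le
    hk_low hk.2
  have ha_term : a * (θ * ((w / z) ^ 2 - 1)) ≤ bx * (2 * ((1 - θ) * (w / z) + 1 + θ)) :=
    calc a * (θ * ((w / z) ^ 2 - 1)) ≤ |a| * (θ * |(w / z) ^ 2 - 1|) :=
          (le_abs_self _).trans_eq (by rw [abs_mul, abs_mul, abs_of_pos hθ0])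
      _ ≤ μ * bx * (θ * |(w / z) ^ 2 - 1|) := by gcongr
      _ = bx * ((1 + s) ^ 2 * |(w / z) ^ 2 - 1|) := by rw [← hμθ]; ring
      _ ≤ bx * (2 * ((1 - θ) * (w / z) + 1 + θ)) := by gcongr
  calc (0 : ℝ)
      ≤ z ^ 2 / 4 * (bx * (2 * ((1 - θ) * (w / z) + 1 + θ)) - a * (θ * ((w / z) ^ 2 - 1))) :=
        mul_nonneg (by positivity) (by linarith)
    _ = bx * (((1 - θ) * (w / z) + 1 + θ) * z / 2) * z
          - a * (θ * (w / z - 1) * z / 2) * ((w / z + 1) * z / 2) := by ring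

theorem stmt10 (θ : ℝ) (hθ : θ ∈ Set.Ioo (0:ℝ) 1) (bx : ℝ) (hb : 0 ≤ bx)
    (μ σ : ℝ)
    (hμ : μ = (1 - θ) ^ 2 / (θ * (1 + θ - 2 * Real.sqrt θ)))
    (hσ : σ = (1 - θ) / ((1 - Real.sqrt θ) * (2 * Real.sqrt (θ + 1) + Real.sqrt θ - 1)))
    (z w : ℝ) (hz : z < 0) (hk : w / z ∈ Set.Icc (-1 / σ) 1)
    (k v ρθ lam₁ : ℝ) (hkk : k = w / z)
    (hlam : lam₁ = ((1 - θ) * k + 1 + θ) * z / 2)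
    (hv : v = (k + 1) * z / 2) (hρθ : ρθ = θ * (k - 1) * z / 2)
    (a : ℝ) (ha : |a| ≤ μ * bx) :
    0 ≤ bx * lam₁ * z - a * ρθ * v :=
  stmt10_general θ hθ bx hb μ σ hμ hσ z w hk k v ρθ lam₁ hkk hlam hv hρθ a ha
end

section
/- Let γ > 1, ρ₀ > 0, ρ > ρ₀, and p(ρ) = ρ^γ/γ. Then the quantity under the square root in the shock curve, (1/(ρρ₀))·(p(ρ)-p(ρ₀))/(ρ-ρ₀), is strictly positive, and the 1-shock curve velocity v = v₀ - √((p(ρ)-p(ρ₀))/(ρρ₀(ρ-ρ₀)))·(ρ-ρ₀) is strictly decreasing in ρ on (ρ₀, ∞). -/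
theorem stmt14 (γ : ℝ) (hγ : 1 < γ) (ρ₀ v₀ : ℝ) (hρ₀ : 0 < ρ₀) :
    (∀ ρ : ℝ, ρ₀ < ρ → 0 < 1 / (ρ * ρ₀) * ((ρ ^ γ / γ - ρ₀ ^ γ / γ) / (ρ - ρ₀))) ∧
    StrictAntiOn
      (fun ρ : ℝ =>
        v₀ - Real.sqrt ((ρ ^ γ / γ - ρ₀ ^ γ / γ) / (ρ * ρ₀ * (ρ - ρ₀))) * (ρ - ρ₀))
      (Set.Ioi ρ₀) := by
  have hγ0 : (0:ℝ) < γ := by linarith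
  have hnum : ∀ ρ : ℝ, ρ₀ < ρ → 0 < ρ ^ γ / γ - ρ₀ ^ γ / γ := by
    intro ρ hρ
    have h1 : ρ₀ ^ γ < ρ ^ γ := Real.rpow_lt_rpow hρ₀.le hρ hγ0
    have : ρ₀ ^ γ / γ < ρ ^ γ / γ := by
      exact div_lt_div_of_pos_right h1 hγ0
    linarith
  have hX : ∀ ρ : ℝ, ρ₀ < ρ →
      0 < (ρ ^ γ / γ - ρ₀ ^ γ / γ) / (ρ * ρ₀ * (ρ - ρ₀)) := by
    intro ρ hρ
    have hρpos : 0 < ρ := lt_trans hρ₀ hρ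
    exact div_pos (hnum ρ hρ) (mul_pos (mul_pos hρpos hρ₀) (by linarith))
  have key : ∀ x : ℝ, ρ₀ < x →
      ((x ^ γ / γ - ρ₀ ^ γ / γ) / (x * ρ₀ * (x - ρ₀))) * (x - ρ₀) ^ 2
        = ((x ^ γ - ρ₀ ^ γ) * (1 - ρ₀ / x)) / (γ * ρ₀) := by
    intro x hx
    have hx0 : (0:ℝ) < x := lt_trans hρ₀ hx
    have h1 : x ≠ 0 := ne_of_gt hx0
    have h2 : ρ₀ ≠ 0 := ne_of_gt hρ₀
    have h3 : x - ρ₀ ≠ 0 := sub_ne_zero.mpr (ne_of_gt hx)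
    have h4 : γ ≠ 0 := ne_of_gt hγ0
    field_simp
  constructor
  · intro ρ hρ
    have hρpos : 0 < ρ := lt_trans hρ₀ hρ
    have := hnum ρ hρ
    have h1 : 0 < 1 / (ρ * ρ₀) := by positivity
    have h2 : 0 < (ρ ^ γ / γ - ρ₀ ^ γ / γ) / (ρ - ρ₀) := div_pos this (by linarith)
    exact mul_pos h1 h2
  · intro a ha b hb hab
    simp only [Set.mem_Ioi] at ha hb
    set Xa := (a ^ γ / γ - ρ₀ ^ γ / γ) / (a * ρ₀ * (a - ρ₀)) with hXa
    set Xb := (b ^ γ / γ - ρ₀ ^ γ / γ) / (b * ρ₀ * (b - ρ₀)) with hXb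
    have ha0 : 0 < a := lt_trans hρ₀ ha
    have hb0 : 0 < b := lt_trans hρ₀ hb
    suffices h : Real.sqrt Xa * (a - ρ₀) < Real.sqrt Xb * (b - ρ₀) by
      simpa using by linarith
    have hbnn : 0 ≤ Real.sqrt Xb * (b - ρ₀) :=
      mul_nonneg (Real.sqrt_nonneg _) (by linarith)
    refine lt_of_pow_lt_pow_left₀ 2 hbnn ?_
    have hsq : ∀ X c : ℝ, 0 ≤ X → (Real.sqrt X * c) ^ 2 = X * c ^ 2 := by
      intro X c hXnn
      rw [mul_pow, Real.sq_sqrt hXnn]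
    rw [hsq _ _ (hX a ha).le, hsq _ _ (hX b hb).le,
      key a ha, key b hb]
    have hfa : a ^ γ - ρ₀ ^ γ < b ^ γ - ρ₀ ^ γ := by
      have := Real.rpow_lt_rpow ha0.le hab hγ0
      linarith
    have hga : 1 - ρ₀ / a < 1 - ρ₀ / b := by
      have : ρ₀ / b < ρ₀ / a := div_lt_div_of_pos_left hρ₀ ha0 hab
      linarith
    have hfann : 0 ≤ a ^ γ - ρ₀ ^ γ := by
      have := Real.rpow_lt_rpow hρ₀.le ha hγ0
      linarith
    have hgann : 0 ≤ 1 - ρ₀ / a := by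
      have : ρ₀ / a < 1 := (div_lt_one ha0).mpr ha
      linarith
    have hmul : (a ^ γ - ρ₀ ^ γ) * (1 - ρ₀ / a) < (b ^ γ - ρ₀ ^ γ) * (1 - ρ₀ / b) :=
      mul_lt_mul'' hfa hga hfann hgann
    exact div_lt_div_of_pos_right hmul (by positivity)
end

section
/- Let θ ∈ (0,1) and μ = (1-θ)²/(θ(1+θ-2√θ)) and f(k) = 2((1-θ)k+1+θ)/(θ|k²-1|). Then f(0) = 2(1+θ)/θ, f is continuous on (-1, 1), f(k) → +∞ as k → 1⁻ and as k → -1⁺, and the minimum of f over [-1/σ, 1] \ {-1, 1} with σ = (1-θ)/((1-√θ)(2√(θ+1)+√θ-1)) is attained and equals at least μ. -/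
set_option maxHeartbeats 1000000 in
theorem stmt15 (θ : ℝ) (hθ : θ ∈ Set.Ioo (0:ℝ) 1)
    (f : ℝ → ℝ) (hf : ∀ k, f k = 2 * ((1 - θ) * k + 1 + θ) / (θ * |k ^ 2 - 1|))
    (μ σ : ℝ)
    (hμ : μ = (1 - θ) ^ 2 / (θ * (1 + θ - 2 * Real.sqrt θ)))
    (hσ : σ = (1 - θ) / ((1 - Real.sqrt θ) * (2 * Real.sqrt (θ + 1) + Real.sqrt θ - 1))) :
    f 0 = 2 * (1 + θ) / θ ∧
    ContinuousOn f (Set.Ioo (-1) 1) ∧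
    Filter.Tendsto f (nhdsWithin 1 (Set.Iio 1)) Filter.atTop ∧
    Filter.Tendsto f (nhdsWithin (-1) (Set.Ioi (-1))) Filter.atTop ∧
    ∃ k₀ ∈ Set.Icc (-1 / σ) 1 \ {-1, 1},
      (∀ k ∈ Set.Icc (-1 / σ) 1 \ {-1, 1}, f k₀ ≤ f k) ∧ μ ≤ f k₀ := by
  obtain ⟨hθ0, hθ1⟩ := hθ
  set s := Real.sqrt θ with hs_def
  have hs0 : 0 < s := Real.sqrt_pos.mpr hθ0
  have hs2 : s ^ 2 = θ := Real.sq_sqrt hθ0.le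
  have hs1 : s < 1 := by nlinarith
  set t := Real.sqrt (θ + 1) with ht_def
  have ht2 : t ^ 2 = θ + 1 := Real.sq_sqrt (by linarith)
  have ht0 : 0 < t := Real.sqrt_pos.mpr (by linarith)
  have ht1 : 1 < t := by nlinarith
  have hD : 0 < 2 * t + s - 1 := by linarith
  have h1s : (0:ℝ) < 1 + s := by linarith
  have hσval : σ = (1 + s) / (2 * t + s - 1) := by
    rw [hσ]
    have h1 : 1 - θ = (1 - s) * (1 + s) := by rw [← hs2]; ring
    rw [h1, mul_div_mul_left _ _ (by linarith : (1:ℝ) - s ≠ 0)]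
  have hσ0 : 0 < σ := by rw [hσval]; positivity
  have hss : (0:ℝ) < 1 + s ^ 2 - 2 * s := by
    nlinarith [mul_pos (sub_pos.mpr hs1) (sub_pos.mpr hs1)]
  -- Part 1
  have part1 : f 0 = 2 * (1 + θ) / θ := by
    rw [hf]; norm_num
  -- Part 2
  have hfeq : f = fun k => 2 * ((1 - θ) * k + 1 + θ) / (θ * |k ^ 2 - 1|) := funext hf
  have part2 : ContinuousOn f (Set.Ioo (-1) 1) := by
    rw [hfeq]
    apply ContinuousOn.div
    · fun_prop
    · fun_prop
    · intro x hx
      have hx2 : x ^ 2 - 1 < 0 := by nlinarith [hx.1, hx.2]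
      exact mul_ne_zero (ne_of_gt hθ0) (abs_ne_zero.mpr (ne_of_lt hx2))
  -- Parts 3,4
  have part3 : Filter.Tendsto f (nhdsWithin 1 (Set.Iio 1)) Filter.atTop := by
    have hnum : Filter.Tendsto (fun k : ℝ => 2 * ((1 - θ) * k + 1 + θ))
        (nhdsWithin 1 (Set.Iio 1)) (nhds 4) := by
      have hc : Continuous fun k : ℝ => 2 * ((1 - θ) * k + 1 + θ) := by fun_prop
      refine Filter.Tendsto.mono_left ?_ nhdsWithin_le_nhds
      have h := hc.tendsto 1
      convert h using 2
      ring
    have hden : Filter.Tendsto (fun k : ℝ => θ * |k ^ 2 - 1|)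
        (nhdsWithin 1 (Set.Iio 1)) (nhdsWithin 0 (Set.Ioi 0)) := by
      rw [tendsto_nhdsWithin_iff]
      constructor
      · have hc : Continuous fun k : ℝ => θ * |k ^ 2 - 1| := by fun_prop
        refine Filter.Tendsto.mono_left ?_ nhdsWithin_le_nhds
        have h := hc.tendsto 1
        simpa using h
      · filter_upwards [Ioo_mem_nhdsLT_of_mem
          (by norm_num : (1:ℝ) ∈ Set.Ioc (-1:ℝ) 1)] with k hk
        have h2 : k ^ 2 - 1 < 0 := by nlinarith [hk.1, hk.2]
        exact Set.mem_Ioi.mpr (mul_pos hθ0 (abs_pos.mpr (ne_of_lt h2)))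
    have h3 := Filter.Tendsto.pos_mul_atTop (by norm_num : (0:ℝ) < 4) hnum
      hden.inv_tendsto_nhdsGT_zero
    exact h3.congr fun k => by rw [hf]; simp [div_eq_mul_inv]
  have part4 : Filter.Tendsto f (nhdsWithin (-1) (Set.Ioi (-1))) Filter.atTop := by
    have hnum : Filter.Tendsto (fun k : ℝ => 2 * ((1 - θ) * k + 1 + θ))
        (nhdsWithin (-1) (Set.Ioi (-1))) (nhds (4 * θ)) := by
      have hc : Continuous fun k : ℝ => 2 * ((1 - θ) * k + 1 + θ) := by fun_prop
      refine Filter.Tendsto.mono_left ?_ nhdsWithin_le_nhds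
      have h := hc.tendsto (-1)
      convert h using 2
      ring
    have hden : Filter.Tendsto (fun k : ℝ => θ * |k ^ 2 - 1|)
        (nhdsWithin (-1) (Set.Ioi (-1))) (nhdsWithin 0 (Set.Ioi 0)) := by
      rw [tendsto_nhdsWithin_iff]
      constructor
      · have hc : Continuous fun k : ℝ => θ * |k ^ 2 - 1| := by fun_prop
        refine Filter.Tendsto.mono_left ?_ nhdsWithin_le_nhds
        have h := hc.tendsto (-1)
        simpa using h
      · filter_upwards [Ioo_mem_nhdsGT_of_mem
          (by norm_num : (-1:ℝ) ∈ Set.Ico (-1:ℝ) 1)] with k hk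
        have h2 : k ^ 2 - 1 < 0 := by nlinarith [hk.1, hk.2]
        exact Set.mem_Ioi.mpr (mul_pos hθ0 (abs_pos.mpr (ne_of_lt h2)))
    have h3 := Filter.Tendsto.pos_mul_atTop (by positivity : (0:ℝ) < 4 * θ) hnum
      hden.inv_tendsto_nhdsGT_zero
    exact h3.congr fun k => by rw [hf]; simp [div_eq_mul_inv]
  -- value at the minimizer
  have hfk0 : f ((s - 1) / (s + 1)) = μ := by
    have hlt : ((s - 1) / (s + 1)) ^ 2 - 1 < 0 := by
      rw [div_pow]
      rw [div_sub' (by positivity : (s+1)^2 ≠ 0)]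
      apply div_neg_of_neg_of_pos _ (by positivity)
      nlinarith
    rw [hf, hμ, abs_of_neg hlt, ← hs2]
    have hne1 : s + 1 ≠ 0 := by linarith
    rw [div_eq_div_iff
      (mul_pos (pow_pos hs0 2) (by linarith : (0:ℝ) < -(((s-1)/(s+1))^2 - 1))).ne'
      (mul_pos (pow_pos hs0 2) hss).ne']
    field_simp
    ring
  -- Part 5
  refine ⟨part1, part2, part3, part4, (s - 1) / (s + 1), ?_, ?_, ?_⟩
  · constructor
    · constructor
      · -- -1/σ ≤ k₀
        rw [div_le_iff₀ hσ0, hσval, div_mul_div_comm, le_div_iff₀ (by positivity)]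
        nlinarith [mul_pos h1s (by linarith : (0:ℝ) < 2 * t - 2 + 2 * s)]
      · have : (s - 1) / (s + 1) ≤ 0 :=
          div_nonpos_of_nonpos_of_nonneg (by linarith) (by linarith)
        linarith
    · simp only [Set.mem_insert_iff, Set.mem_singleton_iff, not_or]
      constructor
      · intro h
        rw [div_eq_iff (by linarith : s + 1 ≠ 0)] at h
        linarith
      · intro h
        rw [div_eq_iff (by linarith : s + 1 ≠ 0)] at h
        linarith
  · -- minimality
    rintro k ⟨⟨hkl, hku⟩, hknot⟩
    simp only [Set.mem_insert_iff, Set.mem_singleton_iff, not_or] at hknot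
    obtain ⟨hkm1, hk1⟩ := hknot
    -- f k₀ = μ, then μ ≤ f k
    rw [hfk0]
    -- now μ ≤ f k
    have hk1' : -(2 * t + s - 1) ≤ (1 + s) * k := by
      rw [div_le_iff₀ hσ0, hσval, ← mul_div_assoc, le_div_iff₀ hD] at hkl
      nlinarith
    rcases lt_or_gt_of_ne hkm1 with hlt | hgt
    · -- k < -1
      have hpos : 0 < k ^ 2 - 1 := by nlinarith
      rw [hf, hμ, abs_of_pos hpos, ← hs2]
      rw [div_le_div_iff₀ (mul_pos (pow_pos hs0 2) hss) (mul_pos (pow_pos hs0 2) hpos)]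
      have hB : (1 + s) * k - (2 * t - s + 1) ≤ 0 := by nlinarith
      have hQ : ((1 + s) * k + (2 * t + s - 1)) * ((1 + s) * k - (2 * t - s + 1)) ≤ 0 :=
        mul_nonpos_of_nonneg_of_nonpos (by linarith) hB
      have hQ' : (1 + s) ^ 2 * k ^ 2 - 2 * (1 - s ^ 2) * k - (3 + 2 * s + 3 * s ^ 2) ≤ 0 := by
        nlinarith [hQ, ht2, hs2]
      have h4 : s ^ 2 * (1 - s) ^ 2 *
          ((1 + s) ^ 2 * k ^ 2 - 2 * (1 - s ^ 2) * k - (3 + 2 * s + 3 * s ^ 2)) ≤ 0 :=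
        mul_nonpos_of_nonneg_of_nonpos (by positivity) hQ'
      nlinarith [h4]
    · -- -1 < k ≤ 1, k ≠ 1 so k < 1
      have hku' : k < 1 := lt_of_le_of_ne hku hk1
      have hneg : k ^ 2 - 1 < 0 := by nlinarith
      rw [hf, hμ, abs_of_neg hneg, ← hs2]
      rw [div_le_div_iff₀ (mul_pos (pow_pos hs0 2) hss)
        (mul_pos (pow_pos hs0 2) (by linarith : (0:ℝ) < -(k ^ 2 - 1)))]
      nlinarith [mul_nonneg (by positivity : (0:ℝ) ≤ s ^ 2 * (1 - s) ^ 2)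
        (sq_nonneg ((1 + s) * k + (1 - s)))]
  · exact le_of_eq hfk0.symm
end

section
/- Let γ > 1, θ = (γ-1)/2, and B₊ ≥ B₋. The region Σ(B₊, B₋) = {(ρ, m) : ρ ≥ 0, v + ρ^θ/θ ≤ B₊, v - ρ^θ/θ ≥ B₋} (with v = m/ρ for ρ > 0, and containing the vacuum states) is a convex subset of the (ρ, m)-plane. -/
/-!
Multiplying the two constraints by `ρ > 0` describes the region as
`Bm ρ + ρ^(θ+1)/θ ≤ m ≤ Bp ρ - ρ^(θ+1)/θ`, and at `ρ = 0` these inequalities cut out exactly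
the vacuum state, since `ρ^(θ+1)` vanishes there. As `ρ ↦ ρ^(θ+1)/θ` is convex for `θ > 0`,
the region is the epigraph of a convex function intersected with the hypograph of a concave one.
-/

open Set

lemma convexOn_rpow_add_one_div {θ : ℝ} (hθ : 0 < θ) :
    ConvexOn ℝ (Ici 0) fun ρ : ℝ => ρ ^ (θ + 1) / θ := by
  simpa only [smul_eq_mul, div_eq_inv_mul] using
    (convexOn_rpow (by linarith : (1 : ℝ) ≤ θ + 1)).smul (inv_nonneg.2 hθ.le)

lemma rpow_add_one_div_eq {ρ : ℝ} (hρ : ρ ≠ 0) (θ : ℝ) :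
    ρ ^ (θ + 1) / θ = ρ ^ θ / θ * ρ := by
  rw [Real.rpow_add_one hρ, mul_div_right_comm]

lemma div_add_rpow_div_le_iff {ρ : ℝ} (hρ : 0 < ρ) (θ m B : ℝ) :
    m / ρ + ρ ^ θ / θ ≤ B ↔ m ≤ B * ρ - ρ ^ (θ + 1) / θ := by
  rw [rpow_add_one_div_eq hρ.ne', ← le_sub_iff_add_le, div_le_iff₀ hρ, sub_mul]

lemma le_div_sub_rpow_div_iff {ρ : ℝ} (hρ : 0 < ρ) (θ m B : ℝ) :
    B ≤ m / ρ - ρ ^ θ / θ ↔ B * ρ + ρ ^ (θ + 1) / θ ≤ m := by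
  rw [rpow_add_one_div_eq hρ.ne', le_sub_iff_add_le, le_div_iff₀ hρ, add_mul]

lemma invariantRegion_eq_epigraph_inter_hypograph {θ : ℝ} (hθ : θ + 1 ≠ 0) (Bp Bm : ℝ) :
    {p : ℝ × ℝ | 0 ≤ p.1 ∧
      ((p.1 = 0 ∧ p.2 = 0) ∨
        (0 < p.1 ∧ p.2 / p.1 + p.1 ^ θ / θ ≤ Bp ∧ Bm ≤ p.2 / p.1 - p.1 ^ θ / θ))} =
      {p : ℝ × ℝ | p.1 ∈ Ici 0 ∧ Bm * p.1 + p.1 ^ (θ + 1) / θ ≤ p.2} ∩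
        {p : ℝ × ℝ | p.1 ∈ Ici 0 ∧ p.2 ≤ Bp * p.1 - p.1 ^ (θ + 1) / θ} := by
  ext ⟨ρ, m⟩
  simp only [mem_ofPred_eq, mem_inter_iff, mem_Ici]
  rcases lt_trichotomy ρ 0 with hneg | rfl | hpos
  · simp [hneg.not_ge]
  · simp [Real.zero_rpow hθ, le_antisymm_iff, and_comm]
  · simp [hpos, hpos.le, hpos.ne', div_add_rpow_div_le_iff hpos,
      le_div_sub_rpow_div_iff hpos, and_comm]

theorem stmt17_general (γ θ Bp Bm : ℝ) (hγ : 1 < γ) (hθ : θ = (γ - 1) / 2) :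
    Convex ℝ {p : ℝ × ℝ | 0 ≤ p.1 ∧
      ((p.1 = 0 ∧ p.2 = 0) ∨
        (0 < p.1 ∧ p.2 / p.1 + p.1 ^ θ / θ ≤ Bp ∧ Bm ≤ p.2 / p.1 - p.1 ^ θ / θ))} := by
  have hθ_pos : 0 < θ := by rw [hθ]; linarith
  have hf := convexOn_rpow_add_one_div hθ_pos
  have hlower : ConvexOn ℝ (Ici 0) fun ρ : ℝ => Bm * ρ + ρ ^ (θ + 1) / θ :=
    ((LinearMap.mulLeft ℝ Bm).convexOn (convex_Ici 0)).add hf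
  have hupper : ConcaveOn ℝ (Ici 0) fun ρ : ℝ => Bp * ρ - ρ ^ (θ + 1) / θ :=
    ((LinearMap.mulLeft ℝ Bp).concaveOn (convex_Ici 0)).sub hf
  rw [invariantRegion_eq_epigraph_inter_hypograph (by linarith) Bp Bm]
  exact hlower.convex_epigraph.inter hupper.convex_hypograph

theorem stmt17 (γ θ Bp Bm : ℝ) (hγ : 1 < γ) (hθ : θ = (γ - 1) / 2) (hB : Bm ≤ Bp) :
    Convex ℝ {p : ℝ × ℝ | 0 ≤ p.1 ∧
      ((p.1 = 0 ∧ p.2 = 0) ∨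
        (0 < p.1 ∧ p.2 / p.1 + p.1 ^ θ / θ ≤ Bp ∧ Bm ≤ p.2 / p.1 - p.1 ^ θ / θ))} :=
  stmt17_general γ θ Bp Bm hγ hθ
end
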